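/- Let Λ be a countable index set, (κ_λ)_{λ∈Λ} ∈ (0,∞)^Λ with sup_λ κ_λ < ∞, and let (φ_α)_{α>0} be a non-linear regularizing filter satisfying Assumption B. Fix α > 0 and let z, z^k ∈ ℓ²(Λ) with ‖z^k − z‖_{ℓ²} → 0 as k → ∞. Then the elements x^k := (φ_α(κ_λ, z^k_λ)/κ_λ)_λ and x := (φ_α(κ_λ, z_λ)/κ_λ)_λ lie in ℓ²(Λ) and x^k converges weakly to x in ℓ²(Λ), i.e. ⟨x^k, w⟩ → ⟨x, w⟩ for every w ∈ ℓ²(Λ). -/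

import Mathlib

/-! The filtered reconstruction is bounded by a quadratic, uniformly in `κ`: nonexpansiveness
bounds `|φ_α(κ,a)/κ|` by `|a|/κ ≤ a²/(dα)` when `|a| > dα/κ`, and (B2) bounds it by `(e/√α)|a|`
otherwise. Since `‖v‖` dominates every coordinate of `v ∈ ℓ²`, this maps bounded sets of `ℓ²`
to bounded sets, so the reconstructions `x^k` are bounded. They converge coordinatewise because
each `φ_α(κ_λ,·)` is continuous, and a bounded sequence in `ℓ²` that converges coordinatewise
converges weakly: the inner products are equicontinuous in `w` and converge on finitely
supported `w`, which are dense. -/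

open scoped ENNReal RealInnerProductSpace
open Filter

noncomputable section

/-- A non-linear regularizing filter: `φ α κ` is (F1) monotone, (F2) nonexpansive,
(F3) zero at zero, and (F4) converges pointwise to the identity as `α → 0`. -/
def IsRegFilter (φ : ℝ → ℝ → ℝ → ℝ) : Prop :=
  (∀ α > (0 : ℝ), ∀ κ > (0 : ℝ), Monotone (φ α κ)) ∧
  (∀ α > (0 : ℝ), ∀ κ > (0 : ℝ), ∀ x y : ℝ, |φ α κ x - φ α κ y| ≤ |x - y|) ∧
  (∀ α > (0 : ℝ), ∀ κ > (0 : ℝ), φ α κ 0 = 0) ∧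
  (∀ κ > (0 : ℝ), ∀ c : ℝ,
    Tendsto (fun α => φ α κ c) (nhdsWithin 0 (Set.Ioi 0)) (nhds c))

/-- Assumption B: (B1) `α ↦ |φ_α(κ,x)|` increases as `α` decreases, and (B2) there are
`d, e > 0` with `|φ_α(κ,x)| ≤ (eκ/√α)·|x|` whenever `|x| ≤ dα/κ`. -/
def AssumptionB (φ : ℝ → ℝ → ℝ → ℝ) : Prop :=
  (∀ κ > (0 : ℝ), ∀ x : ℝ, ∀ α β : ℝ, 0 < α → α ≤ β → |φ β κ x| ≤ |φ α κ x|) ∧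
  (∃ d > (0 : ℝ), ∃ e > (0 : ℝ), ∀ κ > (0 : ℝ), ∀ α > (0 : ℝ), ∀ x : ℝ,
    |x| ≤ d * α / κ → |φ α κ x| ≤ e * κ / Real.sqrt α * |x|)

open scoped Topology

namespace lp

theorem tendsto_inner_of_tendsto_apply {𝕜 ι β : Type*} [RCLike 𝕜] {G : ι → Type*}
    [∀ i, NormedAddCommGroup (G i)] [∀ i, InnerProductSpace 𝕜 (G i)] {l : Filter β}
    {F : β → lp G 2} {f : lp G 2} {C : ℝ} (hF : ∀ k, ‖F k‖ ≤ C)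
    (hFf : ∀ i, Tendsto (fun k => F k i) l (𝓝 (f i))) (w : lp G 2) :
    Tendsto (fun k => inner 𝕜 (F k) w) l (𝓝 (inner 𝕜 f w)) := by
  classical
  have hbdd : ∃ C, ∀ k, ‖innerSL 𝕜 (F k)‖ ≤ C :=
    ⟨C, fun k => (innerSL_apply_norm 𝕜 (F k)).trans_le (hF k)⟩
  have hequi : Equicontinuous fun k => (innerSL 𝕜 (F k) : lp G 2 → 𝕜) :=
    ((NormedSpace.equicontinuous_TFAE fun k => innerSL 𝕜 (F k)).out 5 1).mp hbdd
  have hclosed : IsClosed {w : lp G 2 | Tendsto (fun k => inner 𝕜 (F k) w) l (𝓝 (inner 𝕜 f w))} :=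
    hequi.isClosed_setOfPred_tendsto (innerSL 𝕜 f).continuous
  refine hclosed.mem_of_tendsto (lp.hasSum_single ENNReal.ofNat_ne_top w)
    (Eventually.of_forall fun s => ?_)
  simp only [Set.mem_ofPred_eq, inner_sum, lp.inner_single_right]
  exact tendsto_finsetSum s fun i _ => (hFf i).inner tendsto_const_nhds

variable {ι : Type*} {p : ℝ≥0∞} {c : ℝ}

theorem abs_le_mul_of_abs_le_mul_add_sq (hp : p ≠ 0) (v : lp (fun _ : ι => ℝ) p) {u : ι → ℝ}
    (hc : 0 ≤ c) (hu : ∀ i, |u i| ≤ c * (|v i| + v i ^ 2)) (i : ι) :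
    |u i| ≤ c * (1 + ‖v‖) * |v i| := by
  have hvi : |v i| ≤ ‖v‖ := lp.norm_apply_le_norm hp v i
  calc |u i| ≤ c * (|v i| + |v i| * |v i|) := by
        have h := hu i
        rwa [← sq_abs, sq] at h
    _ ≤ c * (|v i| + ‖v‖ * |v i|) := by gcongr
    _ = c * (1 + ‖v‖) * |v i| := by ring

theorem memℓp_of_abs_le_mul_add_sq (hp : p ≠ 0) (v : lp (fun _ : ι => ℝ) p) {u : ι → ℝ}
    (hc : 0 ≤ c) (hu : ∀ i, |u i| ≤ c * (|v i| + v i ^ 2)) : Memℓp u p :=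
  ((lp.memℓp v).norm.const_mul (c * (1 + ‖v‖))).mono
    (abs_le_mul_of_abs_le_mul_add_sq hp v hc hu)

theorem norm_le_of_abs_le_mul_add_sq [Fact (1 ≤ p)] (v u : lp (fun _ : ι => ℝ) p)
    (hc : 0 ≤ c) (hu : ∀ i, |u i| ≤ c * (|v i| + v i ^ 2)) :
    ‖u‖ ≤ c * (1 + ‖v‖) * ‖v‖ := by
  have hp : p ≠ 0 := (zero_lt_one.trans_le Fact.out).ne'
  have hcv : 0 ≤ c * (1 + ‖v‖) := by positivity
  calc ‖u‖ ≤ ‖(c * (1 + ‖v‖)) • v‖ := lp.norm_mono hp fun i => by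
        rw [lp.coeFn_smul, Pi.smul_apply, norm_smul, Real.norm_of_nonneg hcv]
        simpa only [Real.norm_eq_abs] using abs_le_mul_of_abs_le_mul_add_sq hp v hc hu i
    _ = c * (1 + ‖v‖) * ‖v‖ := by rw [lp.norm_const_smul hp, Real.norm_of_nonneg hcv]

end lp

variable {φ : ℝ → ℝ → ℝ → ℝ} {α κ : ℝ}

theorem IsRegFilter.lipschitzWith (hφ : IsRegFilter φ) (hα : 0 < α) (hκ : 0 < κ) :
    LipschitzWith 1 (φ α κ) :=
  LipschitzWith.of_dist_le_mul fun x y => by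
    simpa [Real.dist_eq] using hφ.2.1 α hα κ hκ x y

theorem IsRegFilter.abs_le (hφ : IsRegFilter φ) (hα : 0 < α) (hκ : 0 < κ) (a : ℝ) :
    |φ α κ a| ≤ |a| := by
  simpa [hφ.2.2.1 α hα κ hκ] using hφ.2.1 α hα κ hκ a 0

theorem AssumptionB.exists_abs_div_le_mul_add_sq (hB : AssumptionB φ) (hφ : IsRegFilter φ)
    (hα : 0 < α) : ∃ c, 0 ≤ c ∧ ∀ {κ : ℝ}, 0 < κ → ∀ a, |φ α κ a / κ| ≤ c * (|a| + a ^ 2) := by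
  obtain ⟨d, hd, e, he, hsmall⟩ := hB.2
  have hdα : 0 < d * α := mul_pos hd hα
  refine ⟨max (e / √α) (1 / (d * α)), by positivity, fun {κ} hκ a => ?_⟩
  rw [abs_div, abs_of_pos hκ, div_le_iff₀ hκ]
  rcases le_or_gt |a| (d * α / κ) with ha | ha
  · calc |φ α κ a| ≤ e * κ / √α * |a| := hsmall κ hκ α hα a ha
      _ = e / √α * |a| * κ := by ring
      _ ≤ max (e / √α) (1 / (d * α)) * (|a| + a ^ 2) * κ := by
          gcongr
          · exact le_max_left _ _
          · exact le_add_of_nonneg_right (sq_nonneg a)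
  · have hκa : d * α ≤ |a| * κ := ((div_lt_iff₀ hκ).mp ha).le
    calc |φ α κ a| ≤ |a| := hφ.abs_le hα hκ a
      _ ≤ 1 / (d * α) * a ^ 2 * κ := by
          rw [← sq_abs, one_div_mul_eq_div, div_mul_eq_mul_div, le_div_iff₀ hdα]
          linarith [mul_le_mul_of_nonneg_left hκa (abs_nonneg a)]
      _ ≤ max (e / √α) (1 / (d * α)) * (|a| + a ^ 2) * κ := by
          gcongr
          · exact le_max_right _ _
          · exact le_add_of_nonneg_left (abs_nonneg a)

theorem statement8 {Λ : Type*}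
    (κ : Λ → ℝ) (hκ : ∀ l, 0 < κ l)
    (φ : ℝ → ℝ → ℝ → ℝ) (hfilter : IsRegFilter φ) (hB : AssumptionB φ)
    (α : ℝ) (hα : 0 < α)
    (z : lp (fun _ : Λ => ℝ) 2) (zk : ℕ → lp (fun _ : Λ => ℝ) 2)
    (hconv : Tendsto (fun k => ‖zk k - z‖) atTop (nhds 0)) :
    ∃ (hx : Memℓp (fun l => φ α (κ l) (z l) / κ l) 2)
      (hxk : ∀ k, Memℓp (fun l => φ α (κ l) (zk k l) / κ l) 2),
      ∀ w : lp (fun _ : Λ => ℝ) 2,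
        Tendsto
          (fun k => ⟪(⟨fun l => φ α (κ l) (zk k l) / κ l, hxk k⟩ : lp (fun _ : Λ => ℝ) 2), w⟫)
          atTop
          (nhds ⟪(⟨fun l => φ α (κ l) (z l) / κ l, hx⟩ : lp (fun _ : Λ => ℝ) 2), w⟫) := by
  obtain ⟨c, hc, hquad⟩ := hB.exists_abs_div_le_mul_add_sq hfilter hα
  have hmem (v : lp (fun _ : Λ => ℝ) 2) : Memℓp (fun l => φ α (κ l) (v l) / κ l) 2 :=
    lp.memℓp_of_abs_le_mul_add_sq two_ne_zero v hc fun l => hquad (hκ l) _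
  refine ⟨hmem z, fun k => hmem (zk k), fun w => ?_⟩
  have hzk : Tendsto zk atTop (𝓝 z) := tendsto_iff_norm_sub_tendsto_zero.2 hconv
  obtain ⟨R, hR⟩ := hzk.norm.bddAbove_range
  refine lp.tendsto_inner_of_tendsto_apply (C := c * (1 + R) * R) (fun k => ?_) (fun l => ?_) w
  · have hRk : ‖zk k‖ ≤ R := hR (Set.mem_range_self k)
    calc _ ≤ c * (1 + ‖zk k‖) * ‖zk k‖ :=
          lp.norm_le_of_abs_le_mul_add_sq (zk k) ⟨_, hmem (zk k)⟩ hc fun l => hquad (hκ l) _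
      _ ≤ c * (1 + R) * R := by
          gcongr
          exact mul_nonneg hc (by linarith [norm_nonneg (zk k)])
  · have hzkl : Tendsto (fun k => zk k l) atTop (𝓝 (z l)) :=
      ((lp.evalCLM ℝ (fun _ : Λ => ℝ) 2 l).continuous.tendsto z).comp hzk
    exact ((hfilter.lipschitzWith hα (hκ l)).continuous.tendsto _ |>.comp hzkl).div_const _
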